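/- Consecutive Gray codes differ in exactly one bit: for every natural number k, the Hamming weight of G(k) XOR G(k+1) is 1, where G(k) = k XOR (k/2). -/
import Mathlib

private lemma xor_div2 (a b : ℕ) : (a ^^^ b) / 2 = a / 2 ^^^ b / 2 := by
  apply Nat.eq_of_testBit_eq
  intro i
  simp [Nat.testBit_div_two, Nat.testBit_xor]

private lemma F_even (m : ℕ) :
    ((2*m) ^^^ ((2*m) / 2)) ^^^ ((2*m + 1) ^^^ ((2*m + 1) / 2)) = 1 := by
  have h1 : (2*m)/2 = m := by omega
  have h2 : (2*m+1)/2 = m := by omega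
  rw [h1, h2]
  apply Nat.eq_of_testBit_eq
  intro i
  cases i with
  | zero =>
      rcases Nat.mod_two_eq_zero_or_one m with h | h <;>
        simp [Nat.testBit_xor, Nat.testBit_zero, Nat.xor_mod_two_eq, Nat.add_mod, h]
  | succ i =>
      simp [Nat.testBit_add_one, xor_div2, h1, h2]

private lemma F_odd (m : ℕ) :
    ((2*m+1) ^^^ ((2*m+1) / 2)) ^^^ ((2*m + 2) ^^^ ((2*m + 2) / 2)) =
      2 * ((m ^^^ (m / 2)) ^^^ ((m + 1) ^^^ ((m + 1) / 2))) := by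
  have h1 : (2*m+1)/2 = m := by omega
  have h2 : (2*m+2)/2 = m+1 := by omega
  rw [h1, h2]
  apply Nat.eq_of_testBit_eq
  intro i
  cases i with
  | zero =>
      have hp : (m+1) % 2 = (m % 2 + 1) % 2 := by omega
      rcases Nat.mod_two_eq_zero_or_one m with h | h <;>
        simp [Nat.testBit_xor, Nat.testBit_zero, Nat.xor_mod_two_eq, Nat.add_mod, hp, h]
  | succ i =>
      have h3 : (2 * ((m ^^^ m / 2) ^^^ ((m + 1) ^^^ (m + 1) / 2))) / 2
          = ((m ^^^ m / 2) ^^^ ((m + 1) ^^^ (m + 1) / 2)) := by omega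
      simp only [Nat.testBit_add_one, xor_div2, h1, h2, h3]

theorem gray_code_consecutive_differ_one_bit (k : ℕ) :
    ((Nat.bits (Nat.xor (Nat.xor k (k / 2)) (Nat.xor (k + 1) ((k + 1) / 2)))).count true)
      = 1 := by
  show (((k ^^^ k / 2) ^^^ ((k + 1) ^^^ (k + 1) / 2)).bits.count true) = 1
  induction k using Nat.strong_induction_on with
  | _ k ih =>
    rcases Nat.even_or_odd k with ⟨m, hm⟩ | ⟨m, hm⟩
    · have hm' : k = 2*m := by omega
      subst hm'
      rw [F_even]
      simp [Nat.one_bits]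
    · subst hm
      have e : 2*m+1+1 = 2*m+2 := by omega
      rw [e, F_odd]
      have ihm := ih m (by omega)
      have hne : ((m ^^^ (m / 2)) ^^^ ((m + 1) ^^^ ((m + 1) / 2))) ≠ 0 := by
        intro h0
        rw [h0] at ihm
        simp [Nat.zero_bits] at ihm
      rw [show 2 * ((m ^^^ m / 2) ^^^ ((m + 1) ^^^ (m + 1) / 2))
            = 2 * ((m ^^^ m / 2) ^^^ ((m + 1) ^^^ (m + 1) / 2)) from rfl,
          Nat.bit0_bits _ hne]
      simpa using ihm
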